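/- Let W : 𝕋^d → ℂ^{2×2} be such that each W(k) is Hermitian; set W̃ := I − W and Wᵢ := W(kᵢ). Then for all k₁,…,k₄: (W̃₃ J[W₂W̃₄] + J[W̃₄W₂]W̃₃) + (W₃ J[W̃₂W₄] + J[W₄W̃₂]W₃) = (J[W₄W̃₂]W₃ + J[W̃₄W₂]W̃₃) + (J[W₄W̃₂]W₃ + J[W̃₄W₂]W̃₃)*; i.e., the sum of the 'gain-term integrands' for W and for W̃ equals the 'loss-term integrand' plus its adjoint. -/
import Mathlib


open Matrix

instance : Fact ((0:ℝ) < 1) := ⟨one_pos⟩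

/-- The `d`-torus `𝕋^d = ℝ^d/ℤ^d`. -/
abbrev Torus (d : ℕ) := Fin d → AddCircle (1 : ℝ)

/-- `J[M] := (tr M) • I − M` for `M ∈ ℂ^{2×2}`. -/
noncomputable def Jmat (M : Matrix (Fin 2) (Fin 2) ℂ) : Matrix (Fin 2) (Fin 2) ℂ :=
  M.trace • (1 : Matrix (Fin 2) (Fin 2) ℂ) - M

lemma Jmat_conjTranspose (M : Matrix (Fin 2) (Fin 2) ℂ) :
    (Jmat M)ᴴ = Jmat Mᴴ := by
  simp [Jmat, conjTranspose_smul, Matrix.trace_conjTranspose]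

theorem stmt19 {d : ℕ} (W : Torus d → Matrix (Fin 2) (Fin 2) ℂ)
    (hW : ∀ k, (W k).IsHermitian) (k₁ k₂ k₃ k₄ : Torus d) :
    ((1 - W k₃) * Jmat (W k₂ * (1 - W k₄)) + Jmat ((1 - W k₄) * W k₂) * (1 - W k₃))
      + (W k₃ * Jmat ((1 - W k₂) * W k₄) + Jmat (W k₄ * (1 - W k₂)) * W k₃)
    = (Jmat (W k₄ * (1 - W k₂)) * W k₃ + Jmat ((1 - W k₄) * W k₂) * (1 - W k₃))
      + (Jmat (W k₄ * (1 - W k₂)) * W k₃ + Jmat ((1 - W k₄) * W k₂) * (1 - W k₃))ᴴ := by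
  simp only [conjTranspose_add, conjTranspose_mul, Jmat_conjTranspose,
    conjTranspose_sub, conjTranspose_one, (hW _).eq]
  abel
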